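/- arXiv:1410.4191 — 5 statements merged into one kernel-verified Lean document; each statement's English description precedes it below -/
import Mathlib

section
/- Let G be a graph, B a zero forcing set of G, and F a set of forces of B. Then the reversal Rev(F), obtained by reversing every force in F, is a set of forces of the terminus Term(F), the set of vertices that perform no force in F; moreover B = Term(Rev(F)). -/
open SimpleGraph

variable {V : Type*}

/-- One simultaneous round of the color change rule: all currently forceable
vertices become black. -/
def forceStep (G : SimpleGraph V) (S : Set V) : Set V :=
  S ∪ {w | ∃ v ∈ S, G.Adj v w ∧ ∀ u, G.Adj v u → u ∉ S → u = w}

/-- The (cumulative) set of black vertices after `t` simultaneous rounds,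
starting from `B`; so `B^{(t)} = propSet G B t \ propSet G B (t-1)`. -/
def propSet (G : SimpleGraph V) (B : Set V) : ℕ → Set V
  | 0 => B
  | t + 1 => forceStep G (propSet G B t)

/-- `B` is a zero forcing set of `G`. -/
def IsZFSet (G : SimpleGraph V) (B : Set V) : Prop := ∃ t, propSet G B t = Set.univ

/-- The zero forcing number `Z(G)`. -/
noncomputable def zfNum (G : SimpleGraph V) : ℕ :=
  sInf {n | ∃ B : Set V, IsZFSet G B ∧ B.ncard = n}

/-- `B` is a minimum zero forcing set of `G`. -/
def IsMinZFSet (G : SimpleGraph V) (B : Set V) : Prop := IsZFSet G B ∧ B.ncard = zfNum G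

/-- The propagation time `pt(G,B)` of a zero forcing set `B`. -/
noncomputable def ptSet (G : SimpleGraph V) (B : Set V) : ℕ :=
  sInf {t | propSet G B t = Set.univ}

/-- The minimum propagation time `pt(G)`. -/
noncomputable def ptMin (G : SimpleGraph V) : ℕ :=
  sInf (ptSet G '' {B | IsMinZFSet G B})

/-- The maximum propagation time `PT(G)`. -/
noncomputable def ptMax (G : SimpleGraph V) : ℕ :=
  sSup (ptSet G '' {B | IsMinZFSet G B})

/-- `IsChronList G S L` : starting from black set `S`, the list `L` is a valid
chronological list of forces, performed one at a time, ending with all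
vertices black. -/
def IsChronList (G : SimpleGraph V) : Set V → List (V × V) → Prop
  | S, [] => S = Set.univ
  | S, (v, w) :: L =>
      v ∈ S ∧ w ∉ S ∧ G.Adj v w ∧ (∀ u, G.Adj v u → u ∉ S → u = w) ∧
        IsChronList G (insert w S) L

/-- `F` is a set of forces of `B`: the unordered set of forces of some
chronological list of forces of `B`. -/
def IsForceSet (G : SimpleGraph V) (B : Set V) (F : Set (V × V)) : Prop :=
  ∃ L : List (V × V), IsChronList G B L ∧ {p | p ∈ L} = F

/-- The terminus of a set of forces: the vertices performing no force. -/
def termSet (F : Set (V × V)) : Set V := {v | ∀ w, (v, w) ∉ F}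

/-- The reverse set of forces. -/
def revSet (F : Set (V × V)) : Set (V × V) := (fun p : V × V => (p.2, p.1)) '' F

/-- The (cumulative) set of black vertices after `t` rounds when propagating
using only the forces in `F`, starting from `B`;
so `F^{(t)} = fpropSet G B F t \ fpropSet G B F (t-1)`. -/
def fpropSet (G : SimpleGraph V) (B : Set V) (F : Set (V × V)) : ℕ → Set V
  | 0 => B
  | t + 1 => fpropSet G B F t ∪
      {w | ∃ v, (v, w) ∈ F ∧ v ∈ fpropSet G B F t ∧ w ∉ fpropSet G B F t ∧
        ∀ u, G.Adj v u → u ∉ fpropSet G B F t → u = w}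

/-- The propagation time `pt(G,F)` of a set of forces `F` of `B`. -/
noncomputable def ptForces (G : SimpleGraph V) (B : Set V) (F : Set (V × V)) : ℕ :=
  sInf {t | fpropSet G B F t = Set.univ}

/-- `B` is an efficient zero forcing set of `G`. -/
def IsEffZFSet (G : SimpleGraph V) (B : Set V) : Prop :=
  IsMinZFSet G B ∧ ptSet G B = ptMin G

/-- `F` is an efficient set of forces of the minimum zero forcing set `B`. -/
def IsEffForces (G : SimpleGraph V) (B : Set V) (F : Set (V × V)) : Prop :=
  IsMinZFSet G B ∧ IsForceSet G B F ∧ ptForces G B F = ptMin G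

/-- Auxiliary: a valid segment of forces from `S` ending at `T` (not necessarily `univ`). -/
def ChronSeg (G : SimpleGraph V) : Set V → List (V × V) → Set V → Prop
  | S, [], T => S = T
  | S, (v, w) :: L, T =>
      v ∈ S ∧ w ∉ S ∧ G.Adj v w ∧ (∀ u, G.Adj v u → u ∉ S → u = w) ∧
        ChronSeg G (insert w S) L T

lemma chronSeg_append {G : SimpleGraph V} : ∀ (L₁ : List (V × V)) {L₂ : List (V × V)}
    {S T U : Set V}, ChronSeg G S L₁ T → ChronSeg G T L₂ U → ChronSeg G S (L₁ ++ L₂) U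
  | [], L₂, S, T, U, h1, h2 => by
      simp only [ChronSeg] at h1; subst h1; simpa using h2
  | (v, w) :: L₁, L₂, S, T, U, h1, h2 => by
      obtain ⟨a, b, c, d, e⟩ := h1
      exact ⟨a, b, c, d, chronSeg_append L₁ e h2⟩

lemma isChronList_iff_chronSeg {G : SimpleGraph V} : ∀ (L : List (V × V)) (S : Set V),
    IsChronList G S L ↔ ChronSeg G S L Set.univ
  | [], S => Iff.rfl
  | (v, w) :: L, S => by
      simp only [IsChronList, ChronSeg]
      exact and_congr_right fun _ => and_congr_right fun _ => and_congr_right fun _ =>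
        and_congr_right fun _ => isChronList_iff_chronSeg L _

lemma snd_mem_iff {G : SimpleGraph V} : ∀ (L : List (V × V)) (S : Set V),
    IsChronList G S L → ∀ x, x ∈ S ↔ ¬ ∃ v, (v, x) ∈ L
  | [], S, h, x => by
      simp only [IsChronList] at h; subst h; simp
  | (v, w) :: L, S, h, x => by
      obtain ⟨hv, hw, hadj, hforce, hL⟩ := h
      have IH := snd_mem_iff L (insert w S) hL x
      constructor
      · rintro hx ⟨u, hu⟩
        rcases List.mem_cons.1 hu with h1 | h1
        · have h2 : x = w := congrArg Prod.snd h1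
          exact hw (h2 ▸ hx)
        · exact (IH.1 (Set.mem_insert_iff.2 (Or.inr hx))) ⟨u, h1⟩
      · intro hx
        have hxw : x ≠ w := fun h' => hx ⟨v, by simp [h']⟩
        have : x ∈ insert w S := IH.2 fun ⟨u, hu⟩ => hx ⟨u, List.mem_cons_of_mem _ hu⟩
        exact (Set.mem_insert_iff.1 this).resolve_left hxw

/-- Key lemma: reversing a chronological list gives a valid segment backwards. -/
lemma rev_chronSeg {G : SimpleGraph V} : ∀ (L : List (V × V)) (S A : Set V),
    IsChronList G S L → A ⊆ S → (∀ a ∈ A, ∀ u, G.Adj a u → u ∈ S) →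
    ChronSeg G (A ∪ {v | ∃ w, (v, w) ∈ L})ᶜ ((L.map fun p => (p.2, p.1)).reverse) Aᶜ
  | [], S, A, h, hAS, hAN => by
      simp only [IsChronList] at h
      simp only [List.map_nil, List.reverse_nil, ChronSeg]
      congr 1
      simp
  | (v, w) :: L, S, A, h, hAS, hAN => by
      obtain ⟨hv, hw, hadj, hforce, hL⟩ := h
      have hvA : v ∉ A := fun hvA => hw (hAN v hvA w hadj)
      have IH := rev_chronSeg L (insert w S) (insert v A) hL
        (by
          intro a ha
          rcases Set.mem_insert_iff.1 ha with rfl | ha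
          · exact Set.mem_insert_iff.2 (Or.inr hv)
          · exact Set.mem_insert_iff.2 (Or.inr (hAS ha)))
        (by
          intro a ha u hau
          rcases Set.mem_insert_iff.1 ha with rfl | ha
          · by_cases hu : u ∈ S
            · exact Set.mem_insert_iff.2 (Or.inr hu)
            · exact (hforce u hau hu) ▸ Set.mem_insert _ _
          · exact Set.mem_insert_iff.2 (Or.inr (hAN a ha u hau)))
      have hset : (A ∪ {x | ∃ y, (x, y) ∈ (v, w) :: L}) =
          (insert v A ∪ {x | ∃ y, (x, y) ∈ L}) := by
        ext x
        simp only [Set.mem_union, Set.mem_setOf_eq, List.mem_cons, Set.mem_insert_iff,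
          Prod.mk.injEq]
        constructor
        · rintro (h | ⟨y, ⟨rfl, rfl⟩ | hy⟩)
          · exact Or.inl (Or.inr h)
          · exact Or.inl (Or.inl rfl)
          · exact Or.inr ⟨_, hy⟩
        · rintro (⟨rfl | h⟩ | ⟨y, hy⟩)
          · exact Or.inr ⟨w, Or.inl ⟨rfl, rfl⟩⟩
          · exact Or.inl h
          · exact Or.inr ⟨y, Or.inr hy⟩
      have hlast : ChronSeg G (insert v A)ᶜ [(w, v)] Aᶜ := by
        refine ⟨?_, ?_, hadj.symm, ?_, ?_⟩
        · intro hmem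
          rcases Set.mem_insert_iff.1 hmem with h | h
          · exact hw (h ▸ hv)
          · exact hw (hAS h)
        · intro hmem
          exact hmem (Set.mem_insert _ _)
        · intro u hu hucomp
          rcases Set.mem_insert_iff.1 (not_not.1 hucomp) with rfl | huA
          · rfl
          · exact absurd (hAN u huA w hu.symm) hw
        · simp only [ChronSeg]
          ext x
          simp only [Set.mem_insert_iff, Set.mem_compl_iff]
          by_cases hx : x = v
          · subst hx; simp [hvA]
          · simp [hx]
      simp only [List.map_cons, List.reverse_cons]
      rw [hset]
      exact chronSeg_append _ IH hlast

/-- If `F` is a set of forces of a zero forcing set `B`, then `Rev(F)` is a set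
of forces of `Term(F)`, and `B = Term(Rev(F))`. -/
theorem rev_isForceSet_of_term {V : Type*} [Finite V] (G : SimpleGraph V) (B : Set V)
    (F : Set (V × V)) (hB : IsZFSet G B) (hF : IsForceSet G B F) :
    IsForceSet G (termSet F) (revSet F) ∧ B = termSet (revSet F) := by
  obtain ⟨L, hL, hFL⟩ := hF
  have hterm : termSet F = ({v | ∃ w, (v, w) ∈ L})ᶜ := by
    ext x
    simp only [termSet, Set.mem_setOf_eq, Set.mem_compl_iff, ← hFL, not_exists]
  constructor
  · refine ⟨(L.map fun p => (p.2, p.1)).reverse, ?_, ?_⟩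
    · rw [isChronList_iff_chronSeg]
      have := rev_chronSeg L B ∅ hL (Set.empty_subset _) (by simp)
      rw [Set.empty_union, Set.compl_empty] at this
      rw [hterm]
      exact this
    · ext p
      simp only [Set.mem_setOf_eq, List.mem_reverse, List.mem_map, revSet, Set.mem_image,
        ← hFL, Set.mem_setOf_eq]
  · ext x
    rw [snd_mem_iff L B hL x]
    simp only [termSet, revSet, Set.mem_setOf_eq, ← hFL]
    constructor
    · rintro h w ⟨⟨a, b⟩, hab, heq⟩
      cases heq
      exact h ⟨a, hab⟩
    · rintro h ⟨u, hu⟩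
      exact h u ⟨(u, x), hu, rfl⟩
end

section
/- Let G be a graph, B a zero forcing set of G, and F a set of forces of B. Then for each t ≥ 0, Q_t(F) ⊆ ⋃_{i=0}^{t} Rev(F)^(i), where Q_0(F)=Term(F) and for t ≥ 1, Q_t(F) is the set of vertices that perform a force in F at time pt(G,F)−t+1. -/
open SimpleGraph

variable {V : Type*}

/-!
Reverse induction on the rounds of `F`. If `v` forces `w` in round `pt - t + 1` of `F`, then
`w` forces `v` in round `t` of `Rev(F)` (unless `v` is black already): every neighbour `u ≠ v` of
`w` is terminal or performs its own force after `w` became black, so in a later round of `F`, and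
by induction `u`, like `w` itself, is black after `t - 1` rounds of `Rev(F)`.
-/

section

variable {G : SimpleGraph V} {B : Set V} {F : Set (V × V)}

theorem fpropSet_mono : Monotone (fpropSet G B F) :=
  monotone_nat_of_le_succ fun _ => Set.subset_union_left

/-- `v → w` is a force of `F` performed in round `r + 1` of the propagation from `B`. -/
structure ForcesAt (G : SimpleGraph V) (B : Set V) (F : Set (V × V)) (r : ℕ) (v w : V) :
    Prop where
  mem : (v, w) ∈ F
  fst_mem : v ∈ fpropSet G B F r
  snd_notMem : w ∉ fpropSet G B F r
  eq_of_adj : ∀ u, G.Adj v u → u ∉ fpropSet G B F r → u = w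

theorem ForcesAt.mem_succ {r : ℕ} {v w : V} (h : ForcesAt G B F r v w) :
    w ∈ fpropSet G B F (r + 1) :=
  Or.inr ⟨v, h.mem, h.fst_mem, h.snd_notMem, h.eq_of_adj⟩

theorem exists_forcesAt_of_mem_fpropSet {x : V} {n : ℕ} (h₀ : x ∉ fpropSet G B F 0)
    (hn : x ∈ fpropSet G B F n) : ∃ r < n, ∃ v, ForcesAt G B F r v x := by
  induction n with
  | zero => exact absurd hn h₀
  | succ n ih =>
    by_cases hx : x ∈ fpropSet G B F n
    · obtain ⟨r, hr, hv⟩ := ih hx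
      exact ⟨r, hr.trans n.lt_succ_self, hv⟩
    · rcases hn with hn | ⟨v, hvx, hv, hx', huniq⟩
      · exact absurd hn hx
      · exact ⟨n, n.lt_succ_self, v, ⟨hvx, hv, hx', huniq⟩⟩

theorem IsChronList.snd_notMem :
    ∀ {S : Set V} {L : List (V × V)}, IsChronList G S L → ∀ p ∈ L, p.2 ∉ S
  | _, [], _, _, hp => absurd hp List.not_mem_nil
  | _, (_, w) :: _, ⟨_, hw, _, _, hL⟩, p, hp => by
    rcases List.mem_cons.mp hp with rfl | hp
    · exact hw
    · exact fun hpS => hL.snd_notMem p hp (Set.mem_insert_of_mem w hpS)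

theorem IsChronList.nodup_map_snd :
    ∀ {S : Set V} {L : List (V × V)}, IsChronList G S L → (L.map Prod.snd).Nodup
  | _, [], _ => List.nodup_nil
  | S, (_, w) :: _, ⟨_, _, _, _, hL⟩ => by
    refine List.nodup_cons.mpr ⟨fun hw => ?_, hL.nodup_map_snd⟩
    obtain ⟨p, hp, rfl⟩ := List.mem_map.mp hw
    exact hL.snd_notMem p hp (Set.mem_insert _ S)

theorem IsChronList.fpropSet_add_length : ∀ {S : Set V} {L : List (V × V)} {n : ℕ},
    IsChronList G S L → (∀ p ∈ L, p ∈ F) → S ⊆ fpropSet G B F n →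
      fpropSet G B F (n + L.length) = Set.univ
  | _, [], _, rfl, _, hSn => Set.univ_subset_iff.mp hSn
  | S, (v, w) :: L, n, ⟨hv, _, _, huniq, hL⟩, hLF, hSn => by
    have hstep : insert w S ⊆ fpropSet G B F (n + 1) := by
      refine Set.insert_subset_iff.mpr ⟨?_, hSn.trans (fpropSet_mono n.le_succ)⟩
      by_cases hw : w ∈ fpropSet G B F n
      · exact Or.inl hw
      · exact Or.inr ⟨v, hLF _ List.mem_cons_self, hSn hv, hw,
          fun u hu hun => huniq u hu (fun huS => hun (hSn huS))⟩
    rw [List.length_cons, ← add_assoc, add_right_comm]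
    exact hL.fpropSet_add_length (fun p hp => hLF p (List.mem_cons_of_mem _ hp)) hstep

theorem IsForceSet.snd_notMem (hF : IsForceSet G B F) {v w : V} (h : (v, w) ∈ F) : w ∉ B := by
  obtain ⟨L, hL, rfl⟩ := hF
  exact hL.snd_notMem (v, w) h

theorem IsForceSet.fst_eq (hF : IsForceSet G B F) {v₁ v₂ w : V} (h₁ : (v₁, w) ∈ F)
    (h₂ : (v₂, w) ∈ F) : v₁ = v₂ := by
  obtain ⟨L, hL, rfl⟩ := hF
  exact congrArg Prod.fst (List.inj_on_of_nodup_map hL.nodup_map_snd h₁ h₂ rfl)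

theorem IsForceSet.fpropSet_ptForces (hF : IsForceSet G B F) :
    fpropSet G B F (ptForces G B F) = Set.univ := by
  obtain ⟨L, hL, rfl⟩ := hF
  refine Nat.sInf_mem (s := {t | fpropSet G B _ t = Set.univ}) ⟨L.length, ?_⟩
  simpa using hL.fpropSet_add_length (F := {p | p ∈ L}) (n := 0) (fun _ => id) subset_rfl

theorem IsForceSet.exists_forcesAt (hF : IsForceSet G B F) {x x' : V} (h : (x, x') ∈ F) :
    ∃ r < ptForces G B F, ForcesAt G B F r x x' := by
  have hx' : x' ∈ fpropSet G B F (ptForces G B F) := hF.fpropSet_ptForces ▸ Set.mem_univ x'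
  obtain ⟨r, hr, v, hv⟩ := exists_forcesAt_of_mem_fpropSet (hF.snd_notMem h) hx'
  obtain rfl := hF.fst_eq hv.mem h
  exact ⟨r, hr, hv⟩

/-- The sets `Q_t(F)`. -/
def qSet (G : SimpleGraph V) (B : Set V) (F : Set (V × V)) (t : ℕ) : Set V :=
  if t = 0 then termSet F
  else {v | ∃ w, (v, w) ∈ F ∧ w ∈ fpropSet G B F (ptForces G B F - t + 1) ∧
          w ∉ fpropSet G B F (ptForces G B F - t)}

theorem ForcesAt.mem_qSet {r : ℕ} {v w : V} (h : ForcesAt G B F r v w)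
    (hr : r < ptForces G B F) : v ∈ qSet G B F (ptForces G B F - r) := by
  rw [qSet, if_neg (by omega), Nat.sub_sub_self hr.le]
  exact ⟨w, h.mem, h.mem_succ, h.snd_notMem⟩

theorem IsForceSet.mem_fpropSet_rev_of_late (hF : IsForceSet G B F) {t : ℕ}
    (ih : ∀ s ≤ t, qSet G B F s ⊆ fpropSet G (termSet F) (revSet F) s) {x : V}
    (hlate : ∀ x' r, ForcesAt G B F r x x' → ptForces G B F - (t + 1) < r) :
    x ∈ fpropSet G (termSet F) (revSet F) t := by
  by_cases hterm : x ∈ termSet F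
  · exact fpropSet_mono t.zero_le hterm
  obtain ⟨x', hxx'⟩ : ∃ x', (x, x') ∈ F := by simpa [termSet] using hterm
  obtain ⟨r, hr, hforce⟩ := hF.exists_forcesAt hxx'
  have hr' := hlate x' r hforce
  exact fpropSet_mono (by omega) (ih (ptForces G B F - r) (by omega) (hforce.mem_qSet hr))

theorem IsForceSet.qSet_succ_subset (hF : IsForceSet G B F) {t : ℕ}
    (ih : ∀ s ≤ t, qSet G B F s ⊆ fpropSet G (termSet F) (revSet F) s) :
    qSet G B F (t + 1) ⊆ fpropSet G (termSet F) (revSet F) (t + 1) := by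
  rw [qSet, if_neg t.succ_ne_zero]
  rintro v ⟨w, hvw, -, hw⟩
  by_cases hv : v ∈ fpropSet G (termSet F) (revSet F) t
  · exact fpropSet_mono t.le_succ hv
  have hlate : ∀ {r}, w ∈ fpropSet G B F r → ptForces G B F - (t + 1) < r :=
    fun hwr => lt_of_not_ge fun hle => hw (fpropSet_mono hle hwr)
  refine Or.inr ⟨w, ⟨(v, w), hvw, rfl⟩, ?_, hv, fun u hwu hu => by_contra fun huv => hu ?_⟩
  · exact hF.mem_fpropSet_rev_of_late ih fun _ _ hforce => hlate hforce.fst_mem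
  · refine hF.mem_fpropSet_rev_of_late ih fun u' _ hforce => hlate (by_contra fun hwr => ?_)
    -- otherwise `u` forces `w`, but `v` is the only vertex forcing `w`
    obtain rfl := hforce.eq_of_adj w hwu.symm hwr
    exact huv (hF.fst_eq hforce.mem hvw)

end

theorem Q_subset_rev_prop_general {V : Type*} (G : SimpleGraph V) (B : Set V)
    (F : Set (V × V)) (hF : IsForceSet G B F) (t : ℕ) :
    (if t = 0 then termSet F
     else {v | ∃ w, (v, w) ∈ F ∧ w ∈ fpropSet G B F (ptForces G B F - t + 1) ∧
            w ∉ fpropSet G B F (ptForces G B F - t)})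
      ⊆ fpropSet G (termSet F) (revSet F) t := by
  induction t using Nat.strong_induction_on with
  | _ t ih =>
  cases t with
  | zero => exact fun _ hv => hv
  | succ t => exact hF.qSet_succ_subset fun s hs => ih s (Nat.lt_succ_of_le hs)

/-- `Q_t(F) ⊆ ⋃_{i=0}^{t} Rev(F)^{(i)}`, where `Q_0(F) = Term(F)` and for
`t ≥ 1`, `Q_t(F)` is the set of vertices performing a force in `F` at time
`pt(G,F) - t + 1` (note `fpropSet G (termSet F) (revSet F) t` is the
cumulative union `⋃_{i=0}^{t} Rev(F)^{(i)}`). -/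
theorem Q_subset_rev_prop {V : Type*} [Finite V] (G : SimpleGraph V) (B : Set V)
    (F : Set (V × V)) (hB : IsZFSet G B) (hF : IsForceSet G B F) (t : ℕ) :
    (if t = 0 then termSet F
     else {v | ∃ w, (v, w) ∈ F ∧ w ∈ fpropSet G B F (ptForces G B F - t + 1) ∧
            w ∉ fpropSet G B F (ptForces G B F - t)})
      ⊆ fpropSet G (termSet F) (revSet F) t :=
  Q_subset_rev_prop_general G B F hF t
end

section
/- Every connected graph of order greater than one has at least two distinct efficient zero forcing sets. -/
open SimpleGraph

variable {V : Type*}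

section Aux

lemma subset_forceStep (G : SimpleGraph V) (S : Set V) : S ⊆ forceStep G S :=
  Set.subset_union_left

lemma propSet_mono (G : SimpleGraph V) (B : Set V) : Monotone (propSet G B) := by
  apply monotone_nat_of_le_succ
  intro t
  exact subset_forceStep G _

lemma propSet_stable (G : SimpleGraph V) (B : Set V) (hst : forceStep G B = B) :
    ∀ t, propSet G B t = B := by
  intro t
  induction t with
  | zero => rfl
  | succ n ih => show forceStep G (propSet G B n) = B; rw [ih, hst]

end Aux

/-- Every connected graph of order greater than one has at least two distinct
efficient zero forcing sets. -/
theorem two_efficient_sets {V : Type*} [Finite V] (G : SimpleGraph V)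
    (hc : G.Connected) (h : 1 < Nat.card V) :
    ∃ B₁ B₂ : Set V, IsEffZFSet G B₁ ∧ IsEffZFSet G B₂ ∧ B₁ ≠ B₂ := by
  classical
  -- the zero forcing number is attained
  have huniv : IsZFSet G (Set.univ : Set V) := ⟨0, rfl⟩
  have hzf_mem : zfNum G ∈ {n | ∃ B : Set V, IsZFSet G B ∧ B.ncard = n} :=
    Nat.sInf_mem ⟨_, Set.univ, huniv, rfl⟩
  obtain ⟨Bm, hBmZ, hBmcard⟩ := hzf_mem
  have hmin_ne : {B : Set V | IsMinZFSet G B}.Nonempty := ⟨Bm, hBmZ, hBmcard⟩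
  -- the minimum propagation time is attained, at B
  have hptmin_mem : ptMin G ∈ ptSet G '' {B | IsMinZFSet G B} :=
    Nat.sInf_mem (hmin_ne.image _)
  obtain ⟨B, hBmin', hBpt⟩ := hptmin_mem
  have hBmin : IsMinZFSet G B := hBmin'
  -- there is an edge
  have hnt : Nontrivial V := Finite.one_lt_card_iff_nontrivial.mp h
  obtain ⟨x, y, hxy⟩ := hnt
  obtain ⟨v, w, hvw⟩ : ∃ v w : V, G.Adj v w := by
    obtain ⟨p⟩ := hc.preconnected x y
    cases p with
    | nil => exact absurd rfl hxy
    | cons hadj q => exact ⟨_, _, hadj⟩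
  -- the complement of one endpoint is a zero forcing set, so zfNum < card V
  have hB0 : IsZFSet G ({w}ᶜ : Set V) := by
    refine ⟨1, ?_⟩
    apply Set.eq_univ_iff_forall.2
    intro z
    by_cases hz : z = w
    · refine Or.inr ⟨v, ?_, by rw [hz]; exact hvw, fun a _ ha => ?_⟩
      · show v ∈ ({w}ᶜ : Set V)
        simp [G.ne_of_adj hvw]
      · have ha' : a ∉ ({w}ᶜ : Set V) := ha
        simp only [Set.mem_compl_iff, Set.mem_singleton_iff, not_not] at ha'
        rw [ha', hz]
    · refine Or.inl ?_
      show z ∈ ({w}ᶜ : Set V)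
      simp [hz]
  have hcardc : ({w}ᶜ : Set V).ncard = Nat.card V - 1 := by
    have h1 : ({w} : Set V).ncard + ({w}ᶜ : Set V).ncard = Nat.card V :=
      Set.ncard_add_ncard_compl _
    have h2 : ({w} : Set V).ncard = 1 := Set.ncard_singleton w
    omega
  have hzlt : zfNum G < Nat.card V := by
    have hle : zfNum G ≤ Nat.card V - 1 :=
      Nat.sInf_le ⟨({w}ᶜ : Set V), hB0, hcardc⟩
    omega
  have hBne : B ≠ Set.univ := by
    intro heq
    have h2 : B.ncard = zfNum G := hBmin.2
    rw [heq, Set.ncard_univ] at h2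
    omega
  -- propagation time of B
  set T := ptSet G B with hTdef
  have hTuniv : propSet G B T = Set.univ := by
    obtain ⟨t, ht⟩ := hBmin.1
    have hmem : ptSet G B ∈ {t | propSet G B t = Set.univ} :=
      Nat.sInf_mem ⟨t, ht⟩
    exact hmem
  have hT1 : 1 ≤ T := by
    rcases Nat.eq_zero_or_pos T with h0 | h1
    · rw [h0] at hTuniv
      exact absurd hTuniv hBne
    · exact h1
  -- the round at which each vertex turns black
  set r : V → ℕ := fun z => sInf {t | z ∈ propSet G B t} with hrdef
  have hr_mem : ∀ z : V, z ∈ propSet G B (r z) := by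
    intro z
    simp only [hrdef]
    exact Nat.sInf_mem (s := {t | z ∈ propSet G B t})
      ⟨T, show z ∈ propSet G B T by rw [hTuniv]; trivial⟩
  have hr_le : ∀ z : V, r z ≤ T := by
    intro z
    simp only [hrdef]
    exact Nat.sInf_le (s := {t | z ∈ propSet G B t})
      (show z ∈ propSet G B T by rw [hTuniv]; trivial)
  have hr_min : ∀ z : V, ∀ s : ℕ, z ∈ propSet G B s → r z ≤ s := by
    intro z s hs
    simp only [hrdef]
    exact Nat.sInf_le hs
  have hr_pos : ∀ z : V, z ∉ B → 1 ≤ r z := by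
    intro z hz
    rcases Nat.eq_zero_or_pos (r z) with h0 | h1
    · have hm := hr_mem z
      rw [h0] at hm
      exact absurd hm hz
    · exact h1
  have hr_not : ∀ z : V, z ∉ B → z ∉ propSet G B (r z - 1) := by
    intro z hz
    have hlt : r z - 1 < r z := by have := hr_pos z hz; omega
    rw [hrdef] at hlt ⊢
    exact Nat.notMem_of_lt_sInf hlt
  -- choose a forcer for each non-initial vertex
  have hforce : ∀ z : V, ∃ u : V, z ∉ B →
      u ∈ propSet G B (r z - 1) ∧ G.Adj u z ∧
        ∀ a, G.Adj u a → a ∉ propSet G B (r z - 1) → a = z := by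
    intro z
    by_cases hz : z ∈ B
    · exact ⟨z, fun hzz => absurd hz hzz⟩
    · have h1 : z ∈ propSet G B (r z - 1 + 1) := by
        have hmem := hr_mem z
        rwa [Nat.sub_add_cancel (hr_pos z hz)]
      rcases h1 with hl | hrr
      · exact absurd hl (hr_not z hz)
      · obtain ⟨u, hu, hadj, huniq⟩ := hrr
        exact ⟨u, fun _ => ⟨hu, hadj, huniq⟩⟩
  choose f hf using hforce
  -- injectivity of the forcing function
  have hinj : ∀ y₁ y₂ : V, y₁ ∉ B → y₂ ∉ B → f y₁ = f y₂ → y₁ = y₂ := by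
    have key : ∀ y₁ y₂ : V, y₁ ∉ B → y₂ ∉ B → r y₁ ≤ r y₂ → f y₁ = f y₂ → y₁ = y₂ := by
      intro y₁ y₂ hy₁ hy₂ hle hfe
      obtain ⟨hu, hadj, huniq⟩ := hf y₁ hy₁
      obtain ⟨hu', hadj', huniq'⟩ := hf y₂ hy₂
      have hzn : y₂ ∉ propSet G B (r y₁ - 1) := fun hm =>
        hr_not y₂ hy₂ (propSet_mono G B (by omega) hm)
      exact (huniq y₂ (hfe ▸ hadj') hzn).symm
    intro y₁ y₂ hy₁ hy₂ hfe
    rcases le_total (r y₁) (r y₂) with hle | hle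
    · exact key y₁ y₂ hy₁ hy₂ hle hfe
    · exact (key y₂ y₁ hy₂ hy₁ hle hfe.symm).symm
  -- the terminus
  set Img : Set V := {u | ∃ z, z ∉ B ∧ f z = u} with hImgdef
  set Term : Set V := Imgᶜ with hTermdef
  have hImg_eq : Img = f '' Bᶜ := by
    ext u
    constructor
    · rintro ⟨z, hz, hfz⟩
      exact ⟨z, hz, hfz⟩
    · rintro ⟨z, hz, hfz⟩
      exact ⟨z, hz, hfz⟩
  have hTermcard : Term.ncard = B.ncard := by
    have h1 : B.ncard + (Bᶜ : Set V).ncard = Nat.card V := Set.ncard_add_ncard_compl _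
    have h2 : Img.ncard + Term.ncard = Nat.card V := Set.ncard_add_ncard_compl _
    have h3 : Img.ncard = (Bᶜ : Set V).ncard := by
      rw [hImg_eq]
      exact Set.ncard_image_of_injOn fun a ha b hb hab => hinj a b ha hb hab
    omega
  -- key reversal induction
  have hkey : ∀ t : ℕ,
      Term ∪ {u | ∃ z, z ∉ B ∧ f z = u ∧ T < t + r z} ⊆ propSet G Term t := by
    intro t
    induction t with
    | zero =>
      rintro u (hu | ⟨z, hz, hfz, hlt⟩)
      · exact hu
      · exact absurd hlt (by have := hr_le z; omega)
    | succ t ih =>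
      rintro u (hu | ⟨z, hz, hfz, hlt⟩)
      · exact subset_forceStep G _ (ih (Or.inl hu))
      · by_cases hlt' : T < t + r z
        · exact subset_forceStep G _ (ih (Or.inr ⟨z, hz, hfz, hlt'⟩))
        · have hTt : T = t + r z := by omega
          refine Or.inr ⟨z, ?_, ?_, ?_⟩
          · -- z is already black in the reversal
            apply ih
            by_cases hzI : z ∈ Img
            · obtain ⟨z', hz', hfz'⟩ := hzI
              refine Or.inr ⟨z', hz', hfz', ?_⟩
              have hm : z ∈ propSet G B (r z' - 1) := by
                have := (hf z' hz').1
                rwa [hfz'] at this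
              have h4 := hr_min z _ hm
              have h5 := hr_pos z' hz'
              omega
            · exact Or.inl hzI
          · -- z is adjacent to u
            have := (hf z hz).2.1
            rw [hfz] at this
            exact this.symm
          · -- u is the unique white neighbor of z
            intro a hadj ha
            by_contra hne
            apply ha
            apply ih
            by_cases haI : a ∈ Img
            · obtain ⟨z', hz', hfz'⟩ := haI
              refine Or.inr ⟨z', hz', hfz', ?_⟩
              by_contra hge
              have hle' : r z' ≤ r z := by omega
              have hzn : z ∉ propSet G B (r z' - 1) := fun hm =>
                hr_not z hz (propSet_mono G B (by omega) hm)
              have hadj' : G.Adj (f z') z := by rw [hfz']; exact hadj.symm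
              have hez : z = z' := (hf z' hz').2.2 z hadj' hzn
              exact hne (by rw [← hfz', ← hez, hfz])
            · exact Or.inl haI
  -- Term is an efficient zero forcing set
  have hTermUniv : propSet G Term T = Set.univ := by
    apply Set.eq_univ_iff_forall.2
    intro u
    apply hkey T
    by_cases hu : u ∈ Img
    · obtain ⟨z, hz, hfz⟩ := hu
      exact Or.inr ⟨z, hz, hfz, by have := hr_pos z hz; omega⟩
    · exact Or.inl hu
  have hTermZF : IsZFSet G Term := ⟨T, hTermUniv⟩
  have hTermMin : IsMinZFSet G Term := ⟨hTermZF, by rw [hTermcard, hBmin.2]⟩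
  have hTermpt : ptSet G Term = ptMin G := by
    have h1 : ptSet G Term ≤ T := Nat.sInf_le hTermUniv
    have h2 : ptMin G ≤ ptSet G Term := Nat.sInf_le ⟨Term, hTermMin, rfl⟩
    omega
  -- B and Term are distinct
  have hne : B ≠ Term := by
    have hstep1 : forceStep G B ≠ B := by
      intro heq
      exact hBne (by rw [← propSet_stable G B heq T, hTuniv])
    have hss : B ⊂ propSet G B 1 :=
      HasSubset.Subset.ssubset_of_ne (subset_forceStep G B) (Ne.symm hstep1)
    obtain ⟨z, hz1, hzB⟩ := Set.exists_of_ssubset hss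
    have hrz : r z = 1 := le_antisymm (hr_min z 1 hz1) (hr_pos z hzB)
    have hfzB : f z ∈ B := by
      have := (hf z hzB).1
      rwa [hrz] at this
    have hfzT : f z ∉ Term := by
      intro hT
      exact hT ⟨z, hzB, rfl⟩
    intro heq
    exact hfzT (heq ▸ hfzB)
  exact ⟨B, Term, ⟨hBmin, hBpt⟩, ⟨hTermMin, hTermpt⟩, hne⟩
end

section
/- For a graph G the following are equivalent: (1) pt(G) = |G| − 1; (2) PT(G) = |G| − 1; (3) Z(G) = 1; (4) G is a path. -/
open SimpleGraph

variable {V : Type*}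

/-!
Each round a black vertex with exactly one white neighbour forces it, so the number of black
vertices grows by at least one per round and `|B| + pt(G, B) ≤ |G|`; hence `pt(G) = |G| - 1` or
`PT(G) = |G| - 1` forces `Z(G) = 1`. Conversely, starting from a single black vertex, by induction
only the most recently blackened vertex can have white neighbours, so exactly one vertex turns
black per round and each one is adjacent to the previous one and to no earlier one: the vertices,
in the order they turn black, form a path, and every minimum zero forcing set needs exactly
`|G| - 1` rounds. A path is forced from an end vertex, so `Z = 1` for paths.
-/

open Set

section Propagation

variable {G : SimpleGraph V} {B : Set V}

lemma propSet_subset_succ (t : ℕ) : propSet G B t ⊆ propSet G B (t + 1) :=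
  subset_union_left

lemma propSet_eq_of_succ_eq {s t : ℕ} (h : propSet G B (s + 1) = propSet G B s) (hst : s ≤ t) :
    propSet G B t = propSet G B s := by
  induction t, hst using Nat.le_induction with
  | base => rfl
  | succ t _ ih => rw [← h, propSet, ih, propSet]

lemma propSet_empty (t : ℕ) : propSet G ∅ t = ∅ := by
  induction t with
  | zero => rfl
  | succ t ih => simp [propSet, forceStep, ih]

lemma propSet_ptSet (hB : IsZFSet G B) : propSet G B (ptSet G B) = univ :=
  Nat.sInf_mem hB

lemma propSet_ne_univ_of_lt_ptSet {t : ℕ} (ht : t < ptSet G B) : propSet G B t ≠ univ :=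
  fun h => (Nat.sInf_le h).not_gt ht

lemma propSet_ssubset_succ (hB : IsZFSet G B) {t : ℕ} (ht : t < ptSet G B) :
    propSet G B t ⊂ propSet G B (t + 1) := by
  refine (propSet_subset_succ t).ssubset_of_ne fun h => propSet_ne_univ_of_lt_ptSet ht ?_
  rw [← propSet_eq_of_succ_eq h.symm ht.le, propSet_ptSet hB]

lemma ncard_add_le_ncard_propSet [Finite V] (hB : IsZFSet G B) {t : ℕ} (ht : t ≤ ptSet G B) :
    B.ncard + t ≤ (propSet G B t).ncard := by
  induction t with
  | zero => rfl
  | succ t ih =>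
    have hlt := ncard_lt_ncard (propSet_ssubset_succ hB ht) (toFinite _)
    have hle := ih (Nat.le_of_succ_le ht)
    omega

lemma ncard_add_ptSet_le [Finite V] (hB : IsZFSet G B) : B.ncard + ptSet G B ≤ Nat.card V := by
  simpa [propSet_ptSet hB] using ncard_add_le_ncard_propSet hB le_rfl

end Propagation

section ZeroForcingNumber

variable {G : SimpleGraph V}

lemma exists_isMinZFSet (G : SimpleGraph V) : ∃ B, IsMinZFSet G B :=
  Nat.sInf_mem (s := {n | ∃ B : Set V, IsZFSet G B ∧ B.ncard = n}) ⟨_, univ, ⟨0, rfl⟩, rfl⟩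

lemma zfNum_pos [Finite V] [Nonempty V] : 0 < zfNum G := by
  obtain ⟨B, ⟨t, ht⟩, hcard⟩ := exists_isMinZFSet G
  refine Nat.pos_of_ne_zero fun h0 => ?_
  rw [h0, ncard_eq_zero] at hcard
  rw [hcard, propSet_empty] at ht
  exact empty_ne_univ ht

lemma zfNum_le_of_isZFSet {B : Set V} (hB : IsZFSet G B) : zfNum G ≤ B.ncard :=
  Nat.sInf_le ⟨B, hB, rfl⟩

lemma zfNum_eq_one_of_ptSet_add_one_eq_card [Finite V] {B : Set V} (hB : IsMinZFSet G B)
    (h : ptSet G B + 1 = Nat.card V) : zfNum G = 1 := by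
  have : Nonempty V := Nat.card_pos_iff.mp (by omega) |>.1
  have hbound := ncard_add_ptSet_le hB.1
  have hpos : 0 < zfNum G := zfNum_pos
  rw [hB.2] at hbound
  omega

lemma exists_ptSet_eq_ptMin (G : SimpleGraph V) : ∃ B, IsMinZFSet G B ∧ ptSet G B = ptMin G :=
  Nat.sInf_mem (Nonempty.image _ (exists_isMinZFSet G))

lemma exists_ptSet_eq_ptMax [Finite V] (G : SimpleGraph V) :
    ∃ B, IsMinZFSet G B ∧ ptSet G B = ptMax G := by
  refine Nat.sSup_mem (Nonempty.image _ (exists_isMinZFSet G)) ⟨Nat.card V, ?_⟩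
  rintro _ ⟨B, hB, rfl⟩
  have := ncard_add_ptSet_le hB.1
  omega

end ZeroForcingNumber

section SingleVertex

variable {G : SimpleGraph V} {v : V}

lemma forceStep_eq_insert_of_forall_ne_adj_mem {S : Set V} {x w : V}
    (hS : ∀ y ∈ S, y ≠ x → ∀ u, G.Adj y u → u ∈ S) (hw : w ∈ forceStep G S) (hwS : w ∉ S) :
    forceStep G S = insert w S ∧ G.Adj x w ∧ ∀ u, G.Adj x u → u ∈ insert w S := by
  have forcer_eq {y u : V} (hy : y ∈ S) (hyu : G.Adj y u) (hu : u ∉ S) : y = x :=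
    by_contra fun hne => hu (hS y hy hne u hyu)
  obtain ⟨y, hy, hyw, hforce⟩ := hw.resolve_left hwS
  obtain rfl := forcer_eq hy hyw hwS
  refine ⟨?_, hyw, fun u hu => (em (u ∈ S)).elim (mem_insert_of_mem w)
    fun huS => hforce u hu huS ▸ mem_insert w S⟩
  refine Subset.antisymm (fun u hu => ?_) (insert_subset hw subset_union_left)
  rcases hu with hu | ⟨z, hz, hzu, -⟩
  · exact mem_insert_of_mem w hu
  by_cases huS : u ∈ S
  · exact mem_insert_of_mem w huS
  obtain rfl := forcer_eq hz hzu huS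
  exact hforce u hzu huS ▸ mem_insert u S

/-- `f i` is the vertex that turns black in round `i`. -/
structure IsForcingPath (G : SimpleGraph V) (v : V) (f : ℕ → V) (t : ℕ) : Prop where
  propSet_eq : propSet G {v} t = f '' Iic t
  injOn : InjOn f (Iic t)
  adj_succ : ∀ i < t, G.Adj (f i) (f (i + 1))
  adj_mem : ∀ i < t, ∀ u, G.Adj (f i) u → u ∈ f '' Iic (i + 1)

namespace IsForcingPath

variable {f : ℕ → V} {t : ℕ}

lemma zero (G : SimpleGraph V) (v : V) : IsForcingPath G v (fun _ => v) 0 where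
  propSet_eq := by simp [propSet]
  injOn := fun i hi j hj _ => by simp_all
  adj_succ := by simp
  adj_mem := by simp

lemma adj_mem_propSet (hf : IsForcingPath G v f t) {i : ℕ} (hi : i < t) {u : V}
    (hu : G.Adj (f i) u) : u ∈ propSet G {v} t :=
  hf.propSet_eq ▸ image_mono (Iic_subset_Iic.mpr hi) (hf.adj_mem i hi u hu)

lemma succ (hf : IsForcingPath G v f t) (hv : IsZFSet G {v}) (ht : t < ptSet G {v}) :
    ∃ g, IsForcingPath G v g (t + 1) := by
  obtain ⟨w, hw, hwS⟩ := exists_of_ssubset (propSet_ssubset_succ hv ht)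
  have only_last : ∀ y ∈ propSet G {v} t, y ≠ f t → ∀ u, G.Adj y u → u ∈ propSet G {v} t := by
    rintro _ hy hne u hu
    obtain ⟨i, hi, rfl⟩ := hf.propSet_eq ▸ hy
    exact hf.adj_mem_propSet (lt_of_le_of_ne hi (by rintro rfl; exact hne rfl)) hu
  obtain ⟨hstep, hadj, hnbr⟩ := forceStep_eq_insert_of_forall_ne_adj_mem only_last hw hwS
  set g : ℕ → V := fun k => if k ≤ t then f k else w
  have hgf : EqOn g f (Iic t) := fun k hk => if_pos hk
  have hg_succ : g (t + 1) = w := if_neg (by omega)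
  have hIic : Iic (t + 1) = insert (t + 1) (Iic t) := by ext; simp [Nat.le_succ_iff, or_comm]
  have himage : g '' Iic (t + 1) = insert w (propSet G {v} t) := by
    rw [hIic, image_insert_eq, hg_succ, hgf.image_eq, hf.propSet_eq]
  have hpre {i : ℕ} (hi : i < t) : g i = f i ∧ g (i + 1) = f (i + 1) ∧
      g '' Iic (i + 1) = f '' Iic (i + 1) :=
    ⟨hgf hi.le, hgf (Nat.succ_le_of_lt hi),
      (hgf.mono (Iic_subset_Iic.mpr (Nat.succ_le_of_lt hi))).image_eq⟩
  refine ⟨g, ⟨?_, ?_, fun i hi => ?_, fun i hi => ?_⟩⟩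
  · exact (hstep.trans himage.symm :)
  · rw [hIic, injOn_insert (by simp), hgf.injOn_iff, hgf.image_eq, hg_succ, ← hf.propSet_eq]
    exact ⟨hf.injOn, hwS⟩
  · rcases Nat.lt_succ_iff_lt_or_eq.mp hi with hi | rfl
    · obtain ⟨h1, h2, -⟩ := hpre hi
      exact h1 ▸ h2 ▸ hf.adj_succ i hi
    · rw [hg_succ, hgf (mem_Iic.mpr le_rfl)]
      exact hadj
  · rcases Nat.lt_succ_iff_lt_or_eq.mp hi with hi | rfl
    · obtain ⟨h1, -, h3⟩ := hpre hi
      exact h1 ▸ h3 ▸ hf.adj_mem i hi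
    · rw [hgf (mem_Iic.mpr le_rfl), himage]
      exact hnbr

lemma succ_eq_of_adj (hf : IsForcingPath G v f t) {i j : ℕ} (hij : i < j) (hj : j ≤ t)
    (hadj : G.Adj (f i) (f j)) : i + 1 = j := by
  obtain ⟨k, hk, hkj⟩ := hf.adj_mem i (by omega) _ hadj
  have : k = j := hf.injOn (Iic_subset_Iic.mpr (by omega) hk) hj hkj
  simp only [mem_Iic] at hk
  omega

lemma adj_iff (hf : IsForcingPath G v f t) {i j : ℕ} (hi : i ≤ t) (hj : j ≤ t) :
    G.Adj (f i) (f j) ↔ i + 1 = j ∨ j + 1 = i := by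
  refine ⟨fun h => ?_, ?_⟩
  · rcases lt_trichotomy i j with hij | rfl | hij
    · exact .inl (hf.succ_eq_of_adj hij hj h)
    · exact (G.irrefl h).elim
    · exact .inr (hf.succ_eq_of_adj hij hi h.symm)
  · rintro (rfl | rfl)
    · exact hf.adj_succ i (by omega)
    · exact (hf.adj_succ j (by omega)).symm

lemma nonempty_iso_pathGraph (hf : IsForcingPath G v f t) (huniv : propSet G {v} t = univ) :
    Nonempty (G ≃g SimpleGraph.pathGraph (t + 1)) := by
  let φ : Fin (t + 1) → V := fun i => f i
  have hφ : φ.Bijective := by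
    refine ⟨fun a b hab => Fin.ext (hf.injOn (Nat.lt_succ_iff.mp a.2) (Nat.lt_succ_iff.mp b.2) hab),
      fun x => ?_⟩
    obtain ⟨i, hi, rfl⟩ := hf.propSet_eq ▸ huniv.symm ▸ mem_univ x
    exact ⟨⟨i, Nat.lt_succ_iff.mpr hi⟩, rfl⟩
  refine ⟨SimpleGraph.Iso.symm ⟨Equiv.ofBijective φ hφ, ?_⟩⟩
  intro a b
  rw [SimpleGraph.pathGraph_adj]
  exact hf.adj_iff (Nat.lt_succ_iff.mp a.2) (Nat.lt_succ_iff.mp b.2)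

end IsForcingPath

lemma exists_isForcingPath (hv : IsZFSet G {v}) :
    ∀ t ≤ ptSet G {v}, ∃ f, IsForcingPath G v f t := by
  intro t
  induction t with
  | zero => exact fun _ => ⟨_, IsForcingPath.zero G v⟩
  | succ t ih =>
    intro ht
    obtain ⟨f, hf⟩ := ih (Nat.le_of_succ_le ht)
    exact hf.succ hv ht

lemma nonempty_iso_pathGraph_of_isZFSet_singleton (hv : IsZFSet G {v}) :
    Nonempty (G ≃g SimpleGraph.pathGraph (ptSet G {v} + 1)) := by
  obtain ⟨f, hf⟩ := exists_isForcingPath hv _ le_rfl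
  exact hf.nonempty_iso_pathGraph (propSet_ptSet hv)

lemma ptSet_add_one_eq_card_of_isZFSet_singleton (hv : IsZFSet G {v}) :
    ptSet G {v} + 1 = Nat.card V := by
  obtain ⟨e⟩ := nonempty_iso_pathGraph_of_isZFSet_singleton hv
  rw [Nat.card_congr e.toEquiv, Nat.card_fin]

lemma ptSet_add_one_eq_card_of_zfNum_eq_one {B : Set V} (hZ : zfNum G = 1)
    (hB : IsMinZFSet G B) : ptSet G B + 1 = Nat.card V := by
  obtain ⟨v, rfl⟩ := ncard_eq_one.mp (hB.2.trans hZ)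
  exact ptSet_add_one_eq_card_of_isZFSet_singleton hB.1

end SingleVertex

lemma isZFSet_singleton_of_iso_pathGraph {G : SimpleGraph V} {n : ℕ} (hn : 0 < n)
    (e : SimpleGraph.pathGraph n ≃g G) : IsZFSet G {e ⟨0, hn⟩} := by
  have hprefix : ∀ t, ∀ i : Fin n, (i : ℕ) ≤ t → e i ∈ propSet G {e ⟨0, hn⟩} t := by
    intro t
    induction t with
    | zero => exact fun i hi => by simp [propSet, show i = ⟨0, hn⟩ from Fin.ext (Nat.le_zero.mp hi)]
    | succ t ih =>
      intro i hi
      rcases Nat.le_succ_iff.mp hi with hi | hi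
      · exact propSet_subset_succ t (ih i hi)
      refine .inr ⟨e ⟨t, by omega⟩, ih _ le_rfl, ?_, fun u hu hu' => ?_⟩
      · rw [e.map_adj_iff, SimpleGraph.pathGraph_adj]
        exact .inl hi.symm
      · obtain ⟨k, rfl⟩ := e.surjective u
        rw [e.map_adj_iff, SimpleGraph.pathGraph_adj] at hu
        refine congrArg e (Fin.ext ?_)
        by_contra hne
        exact hu' (ih k (by simp only at hu; omega))
  refine ⟨n - 1, eq_univ_of_forall fun x => ?_⟩
  obtain ⟨i, rfl⟩ := e.surjective x
  exact hprefix _ i (by omega)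

lemma zfNum_eq_one_of_iso_pathGraph [Finite V] {G : SimpleGraph V} {n : ℕ} (hn : 0 < n)
    (e : G ≃g SimpleGraph.pathGraph n) : zfNum G = 1 := by
  have : Nonempty V := ⟨e.symm ⟨0, hn⟩⟩
  have hle := zfNum_le_of_isZFSet (isZFSet_singleton_of_iso_pathGraph hn e.symm)
  rw [ncard_singleton] at hle
  exact le_antisymm hle zfNum_pos

/-- The following are equivalent: `pt(G) = |G| - 1`; `PT(G) = |G| - 1`;
`Z(G) = 1`; `G` is a path. -/
theorem pt_eq_card_sub_one_tfae {V : Type*} [Finite V] (G : SimpleGraph V) :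
    List.TFAE [ptMin G + 1 = Nat.card V,
      ptMax G + 1 = Nat.card V,
      zfNum G = 1,
      ∃ n, 0 < n ∧ Nonempty (G ≃g SimpleGraph.pathGraph n)] := by
  tfae_have 1 → 3 := fun h => by
    obtain ⟨B, hB, hpt⟩ := exists_ptSet_eq_ptMin G
    exact zfNum_eq_one_of_ptSet_add_one_eq_card hB (hpt ▸ h)
  tfae_have 2 → 3 := fun h => by
    obtain ⟨B, hB, hpt⟩ := exists_ptSet_eq_ptMax G
    exact zfNum_eq_one_of_ptSet_add_one_eq_card hB (hpt ▸ h)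
  tfae_have 3 → 1 := fun h => by
    obtain ⟨B, hB, hpt⟩ := exists_ptSet_eq_ptMin G
    exact hpt ▸ ptSet_add_one_eq_card_of_zfNum_eq_one h hB
  tfae_have 3 → 2 := fun h => by
    obtain ⟨B, hB, hpt⟩ := exists_ptSet_eq_ptMax G
    exact hpt ▸ ptSet_add_one_eq_card_of_zfNum_eq_one h hB
  tfae_have 3 → 4 := fun h => by
    obtain ⟨B, hB⟩ := exists_isMinZFSet G
    obtain ⟨v, rfl⟩ := ncard_eq_one.mp (hB.2.trans h)
    exact ⟨_, Nat.succ_pos _, nonempty_iso_pathGraph_of_isZFSet_singleton hB.1⟩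
  tfae_have 4 → 3 := fun ⟨n, hn, ⟨e⟩⟩ => zfNum_eq_one_of_iso_pathGraph hn e
  tfae_finish
end

section
/- If pt(G) = 1 then Z(G) ≥ |G|/2, but the converse fails: the graph obtained from K_4 by appending a leaf has Z = 3 > |G|/2 and pt = 2. -/
open SimpleGraph

variable {V : Type*}

/-- `K₄` with a leaf appended to one vertex. -/
def k4leaf : SimpleGraph (Fin 5) :=
  SimpleGraph.fromRel (fun a b => (a.val < 4 ∧ b.val < 4) ∨ (a.val = 3 ∧ b.val = 4))


section Aux

lemma forceStep_mono (G : SimpleGraph V) {S T : Set V} (h : S ⊆ T) :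
    forceStep G S ⊆ forceStep G T := by
  intro x hx
  rcases hx with hx | hx
  · exact Or.inl (h hx)
  · obtain ⟨v, hv, hadj, hu⟩ := hx
    exact Or.inr ⟨v, h hv, hadj, fun u hau hun => hu u hau (fun c => hun (h c))⟩

lemma propSet_closed (G : SimpleGraph V) {S B : Set V} (hc : forceStep G S ⊆ S)
    (hB : B ⊆ S) : ∀ t, propSet G B t ⊆ S
  | 0 => hB
  | t + 1 => (forceStep_mono G (propSet_closed G hc hB t)).trans hc

instance : DecidableRel k4leaf.Adj := fun a b =>
  decidable_of_iff _ (SimpleGraph.fromRel_adj _ a b).symm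

/-- Decidable version of `forceStep` for `k4leaf`. -/
def dstep (S : Finset (Fin 5)) : Finset (Fin 5) :=
  S ∪ Finset.univ.filter
    (fun w => ∃ v ∈ S, k4leaf.Adj v w ∧ ∀ u, k4leaf.Adj v u → u ∉ S → u = w)

lemma coe_dstep (F : Finset (Fin 5)) :
    (↑(dstep F) : Set (Fin 5)) = forceStep k4leaf ↑F := by
  ext w
  simp only [dstep, forceStep, Finset.coe_union, Set.mem_union, Finset.mem_coe,
    Finset.coe_filter, Set.mem_setOf_eq, Finset.mem_univ, true_and]

lemma prop1 (F : Finset (Fin 5)) :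
    propSet k4leaf (↑F) 1 = ↑(dstep F) := by
  show forceStep k4leaf (↑F) = _
  exact (coe_dstep F).symm

lemma prop2 (F : Finset (Fin 5)) :
    propSet k4leaf (↑F) 2 = ↑(dstep (dstep F)) := by
  show forceStep k4leaf (propSet k4leaf (↑F) 1) = _
  rw [prop1]
  exact (coe_dstep _).symm

lemma zf_lower : ∀ B : Set (Fin 5), IsZFSet k4leaf B → 3 ≤ B.ncard := by
  classical
  intro B hB
  by_contra hlt
  push_neg at hlt
  have hfin : B.Finite := Set.toFinite B
  set F := hfin.toFinset with hF
  have hcoe : (↑F : Set (Fin 5)) = B := hfin.coe_toFinset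
  have hncard : B.ncard = F.card := Set.ncard_eq_toFinset_card B hfin
  have hcard : F.card ≤ 2 := by omega
  have hd := (by decide : ∀ F : Finset (Fin 5), F.card ≤ 2 →
    dstep (dstep F) = dstep F ∧ dstep F ≠ Finset.univ) F hcard
  have hclosed : forceStep k4leaf ↑(dstep F) ⊆ ↑(dstep F) := by
    rw [← coe_dstep, hd.1]
  have hsub : B ⊆ ↑(dstep F) := by
    rw [← hcoe]
    exact Finset.coe_subset.mpr Finset.subset_union_left
  obtain ⟨t, ht⟩ := hB
  have hsub2 := propSet_closed k4leaf hclosed hsub t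
  rw [ht] at hsub2
  have heq : (↑(dstep F) : Set (Fin 5)) = Set.univ := Set.univ_subset_iff.mp hsub2
  exact hd.2 (by rwa [← Finset.coe_univ, Finset.coe_inj] at heq)

lemma half_le_of_ptMin_one (W : Type) [Finite W] (G : SimpleGraph W)
    (h : ptMin G = 1) : (Nat.card W : ℚ) / 2 ≤ (zfNum G : ℚ) := by
  classical
  have hT : (ptSet G '' {B | IsMinZFSet G B}).Nonempty := by
    by_contra hne
    rw [Set.not_nonempty_iff_eq_empty] at hne
    rw [ptMin, hne, Nat.sInf_empty] at h
    exact absurd h (by norm_num)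
  have h1 : 1 ∈ ptSet G '' {B | IsMinZFSet G B} := by
    have := Nat.sInf_mem hT
    rwa [show sInf (ptSet G '' {B | IsMinZFSet G B}) = 1 from h] at this
  obtain ⟨B, hBmin, hBpt⟩ := h1
  have hS2 : {t | propSet G B t = Set.univ}.Nonempty := by
    by_contra hne
    rw [Set.not_nonempty_iff_eq_empty] at hne
    rw [ptSet, hne, Nat.sInf_empty] at hBpt
    exact absurd hBpt (by norm_num)
  have h2 : propSet G B 1 = Set.univ := by
    have := Nat.sInf_mem hS2
    rwa [show sInf {t | propSet G B t = Set.univ} = 1 from hBpt] at this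
  have hforce : forceStep G B = Set.univ := h2
  have key : ∀ w, w ∉ B → ∃ v, v ∈ B ∧ G.Adj v w ∧
      ∀ u, G.Adj v u → u ∉ B → u = w := by
    intro w hw
    have hmem : w ∈ forceStep G B := hforce ▸ Set.mem_univ w
    rcases hmem with h' | h'
    · exact absurd h' hw
    · obtain ⟨v, hv, ha, hu⟩ := h'
      exact ⟨v, hv, ha, hu⟩
  have hcard : Bᶜ.ncard ≤ B.ncard := by
    apply Set.ncard_le_ncard_of_injOn
      (fun w => if hw : w ∉ B then (key w hw).choose else w)
    · intro w hw
      have hw' : w ∉ B := hw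
      simp only [dif_pos hw']
      exact (key w hw').choose_spec.1
    · intro w₁ h₁ w₂ h₂ he
      have hw₁ : w₁ ∉ B := h₁
      have hw₂ : w₂ ∉ B := h₂
      simp only [dif_pos hw₁, dif_pos hw₂] at he
      have s₁ := (key w₁ hw₁).choose_spec
      have s₂ := (key w₂ hw₂).choose_spec
      exact s₂.2.2 w₁ (he ▸ s₁.2.1) hw₁
  have huniv : Nat.card W ≤ 2 * B.ncard := by
    have hle := Set.ncard_union_le B Bᶜ
    rw [Set.union_compl_self, Set.ncard_univ] at hle
    omega
  have hz : B.ncard = zfNum G := hBmin.2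
  rw [hz] at huniv
  have : (Nat.card W : ℚ) ≤ 2 * (zfNum G : ℚ) := by exact_mod_cast huniv
  linarith

lemma zf_k4leaf : zfNum k4leaf = 3 := by
  have hZF₀ : IsZFSet k4leaf ↑({0, 1, 2} : Finset (Fin 5)) := by
    refine ⟨2, ?_⟩
    rw [prop2, show dstep (dstep {0, 1, 2}) = Finset.univ by decide, Finset.coe_univ]
  have hncard₀ : (↑({0, 1, 2} : Finset (Fin 5)) : Set (Fin 5)).ncard = 3 := by
    rw [Set.ncard_coe_finset]
    decide
  apply le_antisymm
  · exact Nat.sInf_le ⟨_, hZF₀, hncard₀⟩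
  · refine le_csInf ⟨3, ⟨_, hZF₀, hncard₀⟩⟩ ?_
    rintro n ⟨B, hB, rfl⟩
    exact zf_lower B hB

lemma pt_k4leaf : ptMin k4leaf = 2 := by
  classical
  have hd3 : ∀ F : Finset (Fin 5), F.card ≤ 3 → dstep F ≠ Finset.univ := by decide
  have hZF₀ : IsZFSet k4leaf ↑({0, 1, 2} : Finset (Fin 5)) := by
    refine ⟨2, ?_⟩
    rw [prop2, show dstep (dstep {0, 1, 2}) = Finset.univ by decide, Finset.coe_univ]
  have hncard₀ : (↑({0, 1, 2} : Finset (Fin 5)) : Set (Fin 5)).ncard = 3 := by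
    rw [Set.ncard_coe_finset]; decide
  have hmin₀ : IsMinZFSet k4leaf ↑({0, 1, 2} : Finset (Fin 5)) :=
    ⟨hZF₀, by rw [hncard₀, zf_k4leaf]⟩
  -- general: every min ZF set has ptSet ≥ 2
  have hlow : ∀ B : Set (Fin 5), IsMinZFSet k4leaf B → 2 ≤ ptSet k4leaf B := by
    intro B hBmin
    have hfin : B.Finite := Set.toFinite B
    have hcoe : (↑hfin.toFinset : Set (Fin 5)) = B := hfin.coe_toFinset
    have hncard : B.ncard = hfin.toFinset.card := Set.ncard_eq_toFinset_card B hfin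
    have hc3 : hfin.toFinset.card = 3 := by rw [← hncard, hBmin.2, zf_k4leaf]
    have h0 : propSet k4leaf B 0 ≠ Set.univ := by
      intro h
      have h5 : B.ncard = 5 := by
        rw [show propSet k4leaf B 0 = B from rfl] at h
        rw [h, Set.ncard_univ, Nat.card_eq_fintype_card]
        rfl
      omega
    have h1 : propSet k4leaf B 1 ≠ Set.univ := by
      rw [← hcoe, prop1]
      intro h
      exact hd3 hfin.toFinset (by omega) (by rwa [← Finset.coe_univ, Finset.coe_inj] at h)
    obtain ⟨t, ht⟩ := hBmin.1
    apply le_csInf ⟨t, ht⟩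
    intro s hs
    by_contra hlt
    push_neg at hlt
    interval_cases s
    · exact h0 hs
    · exact h1 hs
  have hpt₀ : ptSet k4leaf ↑({0, 1, 2} : Finset (Fin 5)) = 2 := by
    have h2 : propSet k4leaf (↑({0, 1, 2} : Finset (Fin 5))) 2 = Set.univ := by
      rw [prop2, show dstep (dstep {0, 1, 2}) = Finset.univ by decide, Finset.coe_univ]
    exact le_antisymm (Nat.sInf_le h2) (hlow _ hmin₀)
  apply le_antisymm
  · exact Nat.sInf_le ⟨_, hmin₀, hpt₀⟩
  · refine le_csInf ⟨2, ⟨_, hmin₀, hpt₀⟩⟩ ?_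
    rintro x ⟨B, hB, rfl⟩
    exact hlow B hB

end Aux

/-- If `pt(G) = 1` then `Z(G) ≥ |G|/2`; but the converse fails: the graph
obtained from `K₄` by appending a leaf has `Z = 3 > |G|/2 = 5/2` and
`pt = 2`. -/
theorem pt_one_implies_zf_ge_half :
    (∀ (W : Type) [Finite W] (G : SimpleGraph W), ptMin G = 1 →
        (Nat.card W : ℚ) / 2 ≤ (zfNum G : ℚ)) ∧
      zfNum k4leaf = 3 ∧ (Nat.card (Fin 5) : ℚ) / 2 < (zfNum k4leaf : ℚ) ∧
        ptMin k4leaf = 2 := by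
  refine ⟨half_le_of_ptMin_one, zf_k4leaf, ?_, pt_k4leaf⟩
  rw [zf_k4leaf]
  simp [Nat.card_eq_fintype_card]
  norm_num
end
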